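/- arXiv:2104.09882 — 2 statements merged into one kernel-verified Lean document; each statement's English description precedes it below -/
import Mathlib

section
/- Let V, Q be finite-dimensional inner product spaces, b : V × Q → ℝ bilinear, and s : Q → V the supremizer map ⟨s(p), v⟩_V = b(v,p). Suppose Q_N ⊂ Q is a subspace and V_N ⊂ V a subspace containing s(p) for every p ∈ Q_N. If the global inf-sup constant β := inf_{p ∈ Q, p≠0} ‖s(p)‖_V/‖p‖_Q is positive when restricted to Q_N (i.e. inf_{p∈Q_N,p≠0} ‖s(p)‖/‖p‖ ≥ β_N > 0), then the reduced inf-sup constant satisfies inf_{p ∈ Q_N, p≠0} sup_{v ∈ V_N, v≠0} b(v,p)/(‖v‖_V ‖p‖_Q) ≥ β_N. -/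
/-! A reduced pressure `p` is tested against its own supremizer `s p`, which lies in `V_N` by
enrichment: `b (s p) p = ‖s p‖²`, so the test ratio `b (s p) p / (‖s p‖ ‖p‖)` is exactly the
supremizer-norm ratio `‖s p‖ / ‖p‖ ≥ β_N`. -/

theorem real_inner_self_div_norm_mul {V : Type*} [NormedAddCommGroup V] [InnerProductSpace ℝ V]
    (v : V) (r : ℝ) : inner ℝ v v / (‖v‖ * r) = ‖v‖ / r := by
  rw [real_inner_self_eq_norm_sq]
  rcases eq_or_ne ‖v‖ 0 with hv | hv
  · simp [hv]
  · rw [pow_two, mul_div_mul_left _ _ hv]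

theorem supremizer_enrichment_infsup_general {V Q : Type*}
    [NormedAddCommGroup V] [InnerProductSpace ℝ V]
    [NormedAddCommGroup Q] [InnerProductSpace ℝ Q]
    (b : V →ₗ[ℝ] Q →ₗ[ℝ] ℝ)
    (s : Q → V) (hs : ∀ p v, (inner ℝ (s p) v : ℝ) = b v p)
    (QN : Submodule ℝ Q) (VN : Submodule ℝ V)
    (henrich : ∀ p ∈ QN, s p ∈ VN)
    (βN : ℝ) (hβN : 0 < βN)
    (hrestr : ∀ p ∈ QN, p ≠ 0 → βN ≤ ‖s p‖ / ‖p‖) :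
    ∀ p ∈ QN, p ≠ 0 → ∃ v ∈ VN, v ≠ 0 ∧ βN ≤ b v p / (‖v‖ * ‖p‖) := by
  intro p hp hp0
  have hratio := hrestr p hp hp0
  have hsp : s p ≠ 0 := by
    rintro hzero
    have : 0 < ‖s p‖ / ‖p‖ := hβN.trans_le hratio
    simp [hzero] at this
  refine ⟨s p, henrich p hp, hsp, ?_⟩
  rwa [← hs, real_inner_self_div_norm_mul]

/-- Supremizer enrichment guarantees reduced-level inf-sup stability: if the reduced
velocity space contains the supremizers of all reduced pressures, the reduced inf-sup
constant is bounded below by the restricted supremizer-norm ratio `β_N`. -/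
theorem supremizer_enrichment_infsup {V Q : Type*}
    [NormedAddCommGroup V] [InnerProductSpace ℝ V] [FiniteDimensional ℝ V]
    [NormedAddCommGroup Q] [InnerProductSpace ℝ Q] [FiniteDimensional ℝ Q]
    (b : V →ₗ[ℝ] Q →ₗ[ℝ] ℝ)
    (s : Q → V) (hs : ∀ p v, (inner ℝ (s p) v : ℝ) = b v p)
    (QN : Submodule ℝ Q) (VN : Submodule ℝ V)
    (henrich : ∀ p ∈ QN, s p ∈ VN)
    (βN : ℝ) (hβN : 0 < βN)
    (hrestr : ∀ p ∈ QN, p ≠ 0 → βN ≤ ‖s p‖ / ‖p‖) :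
    ∀ p ∈ QN, p ≠ 0 → ∃ v ∈ VN, v ≠ 0 ∧ βN ≤ b v p / (‖v‖ * ‖p‖) :=
  supremizer_enrichment_infsup_general b s hs QN VN henrich βN hβN hrestr
end

section
/- Let H be a Hilbert space, y₁,...,y_M ∈ H snapshots, and {Φ₁,...,Φ_N} the first N POD basis vectors (orthonormal eigenvectors construction from the correlation matrix with eigenvalues λ₁ ≥ ... ≥ λ_M ≥ 0). Then the POD projection error satisfies Σ_{i=1}^{M} ‖y_i − Σ_{k=1}^{N} ⟨y_i, Φ_k⟩ Φ_k‖²_H = Σ_{k=N+1}^{M} λ_k. -/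
/-! Write `C = gram ℝ y` and let `V` be the matrix whose rows are the eigenvectors `v k`. The
hypotheses say `V Vᵀ = 1` and `C Vᵀ = Vᵀ diag λ`, so `∑ ‖yᵢ‖² = tr C = ∑ λₖ`. Moreover
`⟪yⱼ, Φₖ⟫ = √λₖ vₖⱼ`, so the modes with `λₖ ≠ 0` are orthonormal (the others vanish) and each
captures the energy `∑ⱼ ⟪yⱼ, Φₖ⟫² = λₖ`. Bessel's identity
`‖x - ∑ₖ ⟪x, Φₖ⟫ Φₖ‖² = ‖x‖² - ∑ₖ ⟪x, Φₖ⟫²` then leaves exactly the discarded eigenvalues. -/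

/-- The `k`-th POD basis vector built from the eigenpair `(lam k, v k)` of the snapshot
correlation matrix. -/
noncomputable def podBasis {H : Type*} [NormedAddCommGroup H] [InnerProductSpace ℝ H]
    {M : ℕ} (y : Fin M → H) (lam : Fin M → ℝ) (v : Fin M → Fin M → ℝ) (k : Fin M) : H :=
  if lam k = 0 then 0 else (Real.sqrt (lam k))⁻¹ • ∑ i, v k i • y i

open Finset Matrix

theorem norm_sub_sum_inner_smul_sq {E ι : Type*} [NormedAddCommGroup E] [InnerProductSpace ℝ E]
    [DecidableEq ι] {e : ι → E}
    (he : ∀ k l, e k ≠ 0 → inner ℝ (e k) (e l) = if k = l then (1 : ℝ) else 0)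
    (s : Finset ι) (x : E) :
    ‖x - ∑ k ∈ s, inner ℝ x (e k) • e k‖ ^ 2 = ‖x‖ ^ 2 - ∑ k ∈ s, inner ℝ x (e k) ^ 2 := by
  set p := ∑ k ∈ s, inner ℝ x (e k) • e k
  have hproj : ∀ k ∈ s, inner ℝ (e k) p = inner ℝ x (e k) := by
    intro k hk
    by_cases hek : e k = 0
    · simp [hek]
    simp only [p, inner_sum, real_inner_smul_right, he k _ hek, mul_ite, mul_one, mul_zero,
      sum_ite_eq, if_pos hk]
  have hxp : inner ℝ x p = ∑ k ∈ s, inner ℝ x (e k) ^ 2 := by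
    simp only [p, inner_sum, real_inner_smul_right, sq]
  have hpp : ‖p‖ ^ 2 = ∑ k ∈ s, inner ℝ x (e k) ^ 2 := by
    rw [← real_inner_self_eq_norm_sq]
    conv_lhs => rw [show p = ∑ k ∈ s, inner ℝ x (e k) • e k from rfl, sum_inner]
    exact sum_congr rfl fun k hk => by rw [real_inner_smul_left, hproj k hk, sq]
  rw [norm_sub_sq_real, hxp, hpp]
  ring

theorem Matrix.trace_eq_sum_of_mul_transpose_eq_diagonal {ι R : Type*} [Fintype ι]
    [DecidableEq ι] [CommRing R] {C V : Matrix ι ι R} {d : ι → R}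
    (hV : V * Vᵀ = 1) (hC : C * Vᵀ = Vᵀ * diagonal d) :
    C.trace = ∑ i, d i := by
  calc C.trace = (C * Vᵀ * V).trace := by rw [Matrix.mul_assoc, mul_eq_one_comm.mp hV, mul_one]
    _ = (V * Vᵀ * diagonal d).trace := by rw [hC, trace_mul_cycle, Matrix.mul_assoc]
    _ = ∑ i, d i := by rw [hV, one_mul, trace_diagonal]

section

variable {H : Type*} [NormedAddCommGroup H] [InnerProductSpace ℝ H] {M : ℕ}
  {y : Fin M → H} {lam : Fin M → ℝ} {v : Fin M → Fin M → ℝ}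

theorem podBasis_of_eq_zero {k : Fin M} (hk : lam k = 0) : podBasis y lam v k = 0 := by
  simp [podBasis, hk]

theorem inner_podBasis
    (heig : ∀ k j : Fin M, ∑ i, (inner ℝ (y j) (y i) : ℝ) * v k i = lam k * v k j)
    (hnn : ∀ k, 0 ≤ lam k) (j k : Fin M) :
    inner ℝ (y j) (podBasis y lam v k) = Real.sqrt (lam k) * v k j := by
  by_cases hk : lam k = 0
  · simp [podBasis_of_eq_zero hk, hk]
  have hsqrt : Real.sqrt (lam k) ≠ 0 := Real.sqrt_ne_zero'.mpr ((hnn k).lt_of_ne' hk)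
  have hcomb : ∑ i, v k i * inner ℝ (y j) (y i) = lam k * v k j := by
    rw [← heig k j]
    exact sum_congr rfl fun i _ => mul_comm _ _
  rw [podBasis, if_neg hk, real_inner_smul_right, inner_sum]
  simp only [real_inner_smul_right]
  rw [hcomb]
  field_simp
  rw [Real.sq_sqrt (hnn k)]

theorem inner_podBasis_podBasis
    (horth : ∀ k l : Fin M, ∑ i, v k i * v l i = if k = l then (1:ℝ) else 0)
    (heig : ∀ k j : Fin M, ∑ i, (inner ℝ (y j) (y i) : ℝ) * v k i = lam k * v k j)
    (hnn : ∀ k, 0 ≤ lam k) {k : Fin M} (hk : lam k ≠ 0) (l : Fin M) :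
    inner ℝ (podBasis y lam v k) (podBasis y lam v l) = if k = l then (1 : ℝ) else 0 := by
  have hsqrt : Real.sqrt (lam k) ≠ 0 := Real.sqrt_ne_zero'.mpr ((hnn k).lt_of_ne' hk)
  rw [podBasis, if_neg hk, real_inner_smul_left, sum_inner]
  simp only [real_inner_smul_left, inner_podBasis heig hnn]
  have hsum :
      ∑ i, v k i * (Real.sqrt (lam l) * v l i) = Real.sqrt (lam l) * ∑ i, v k i * v l i := by
    rw [mul_sum]
    exact sum_congr rfl fun i _ => by ring
  rw [hsum, horth]
  split_ifs with hkl
  · subst hkl; field_simp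
  · simp

theorem sum_sq_inner_podBasis
    (horth : ∀ k l : Fin M, ∑ i, v k i * v l i = if k = l then (1:ℝ) else 0)
    (heig : ∀ k j : Fin M, ∑ i, (inner ℝ (y j) (y i) : ℝ) * v k i = lam k * v k j)
    (hnn : ∀ k, 0 ≤ lam k) (k : Fin M) :
    ∑ j, inner ℝ (y j) (podBasis y lam v k) ^ 2 = lam k := by
  simp only [inner_podBasis heig hnn, mul_pow, Real.sq_sqrt (hnn k), ← mul_sum]
  simp [sq, horth k k]

theorem sum_norm_sq_eq_sum_eigenvalues
    (horth : ∀ k l : Fin M, ∑ i, v k i * v l i = if k = l then (1:ℝ) else 0)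
    (heig : ∀ k j : Fin M, ∑ i, (inner ℝ (y j) (y i) : ℝ) * v k i = lam k * v k j) :
    ∑ i, ‖y i‖ ^ 2 = ∑ k, lam k := by
  have hV : of v * (of v)ᵀ = 1 := by
    ext k l
    simpa [mul_apply, one_apply] using horth k l
  have hC : gram ℝ y * (of v)ᵀ = (of v)ᵀ * diagonal lam := by
    ext j k
    rw [mul_diagonal]
    simpa [mul_apply, mul_comm] using heig k j
  rw [← trace_eq_sum_of_mul_transpose_eq_diagonal hV hC]
  simp [trace]

end

theorem pod_error_identity_general {H : Type*} [NormedAddCommGroup H] [InnerProductSpace ℝ H]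
    (M : ℕ) (y : Fin M → H) (lam : Fin M → ℝ) (v : Fin M → Fin M → ℝ)
    (horth : ∀ k l : Fin M, ∑ i, v k i * v l i = if k = l then (1:ℝ) else 0)
    (heig : ∀ k j : Fin M, ∑ i, (inner ℝ (y j) (y i) : ℝ) * v k i = lam k * v k j)
    (hnn : ∀ k, 0 ≤ lam k)
    (N : ℕ) :
    ∑ i, ‖y i - ∑ k ∈ Finset.univ.filter (fun k : Fin M => (k : ℕ) < N),
        (inner ℝ (y i) (podBasis y lam v k) : ℝ) • podBasis y lam v k‖^2
      = ∑ k ∈ Finset.univ.filter (fun k : Fin M => N ≤ (k : ℕ)), lam k := by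
  have hmodes : ∀ k l, podBasis y lam v k ≠ 0 →
      inner ℝ (podBasis y lam v k) (podBasis y lam v l) = if k = l then (1 : ℝ) else 0 :=
    fun k l hk => inner_podBasis_podBasis horth heig hnn (mt podBasis_of_eq_zero hk) l
  simp only [norm_sub_sum_inner_smul_sq hmodes, sum_sub_distrib]
  rw [sum_comm, sum_norm_sq_eq_sum_eigenvalues horth heig]
  simp only [sum_sq_inner_podBasis horth heig hnn]
  rw [← sum_filter_add_sum_filter_not univ (fun k : Fin M => (k : ℕ) < N)]
  simp [not_lt]

/-- The fundamental POD error identity: the total squared projection error of the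
snapshots onto the span of the first `N` POD modes equals the sum of the discarded
eigenvalues of the correlation matrix. -/
theorem pod_error_identity {H : Type*} [NormedAddCommGroup H] [InnerProductSpace ℝ H]
    (M : ℕ) (y : Fin M → H) (lam : Fin M → ℝ) (v : Fin M → Fin M → ℝ)
    (horth : ∀ k l : Fin M, ∑ i, v k i * v l i = if k = l then (1:ℝ) else 0)
    (heig : ∀ k j : Fin M, ∑ i, (inner ℝ (y j) (y i) : ℝ) * v k i = lam k * v k j)
    (hnn : ∀ k, 0 ≤ lam k)
    (hsorted : ∀ i j : Fin M, i ≤ j → lam j ≤ lam i)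
    (N : ℕ) (hN : N ≤ M) :
    ∑ i, ‖y i - ∑ k ∈ Finset.univ.filter (fun k : Fin M => (k : ℕ) < N),
        (inner ℝ (y i) (podBasis y lam v k) : ℝ) • podBasis y lam v k‖^2
      = ∑ k ∈ Finset.univ.filter (fun k : Fin M => N ≤ (k : ℕ)), lam k :=
  pod_error_identity_general M y lam v horth heig hnn N
end
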